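/- Let 𝓑 ⊆ 2^V \ {V} be a Sperner family of nonempty sets with ⋃_{B∈𝓑} B = V, ⋂_{B∈𝓑} B = ∅, |𝓑| = m, |V| = n, and let δ be the size of a smallest member of 𝓑. Then OPT_*(𝓑) ≥ m for every measure * ∈ {B, BA, TA, C, BC, L}; OPT_*(𝓑) ≥ n for every * ∈ {TA, C, BC, L}; and OPT_L(𝓑) ≥ max{n(δ+1), 2m}. -/

import Mathlib

open Finset

variable {V : Type*} [Fintype V] [DecidableEq V]

/-- A pure Horn CNF is a finite set of clauses `(B, v)`: body `B`, head `v`,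
with `B` nonempty and `v ∉ B`. -/
def PureHorn (Φ : Finset (Finset V × V)) : Prop :=
  ∀ c ∈ Φ, c.1.Nonempty ∧ c.2 ∉ c.1

/-- A set `W` is closed under the clauses of `Φ`. -/
def HornClosed (Φ : Finset (Finset V × V)) (W : Set V) : Prop :=
  ∀ c ∈ Φ, ↑c.1 ⊆ W → c.2 ∈ W

/-- Forward-chaining closure `F_Φ(Z)`: the smallest set containing `Z`
that is closed under the clauses of `Φ`. -/
def hornClosure (Φ : Finset (Finset V × V)) (Z : Set V) : Set V :=
  ⋂₀ {W : Set V | Z ⊆ W ∧ HornClosed Φ W}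

/-- `Ψ_𝓑 = ⋀_{B ∈ 𝓑} B → (V \ B)`. -/
def keyCNF (𝓑 : Finset (Finset V)) : Finset (Finset V × V) :=
  𝓑.biUnion fun B => (Finset.univ \ B).image fun v => (B, v)

/-- `Φ` represents the key Horn function `h_𝓑`, i.e. `Φ` is a pure Horn CNF
equivalent to `Ψ_𝓑`. -/
def Represents (𝓑 : Finset (Finset V)) (Φ : Finset (Finset V × V)) : Prop :=
  PureHorn Φ ∧ ∀ Z : Finset V, hornClosure Φ ↑Z = hornClosure (keyCNF 𝓑) ↑Z

/-- (B) number of (distinct) bodies. -/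
def sizeB (Φ : Finset (Finset V × V)) : ℕ := (Φ.image Prod.fst).card
/-- (BA) body area `Σ_i |B_i|` over the distinct bodies. -/
def sizeBA (Φ : Finset (Finset V × V)) : ℕ := ∑ B ∈ Φ.image Prod.fst, B.card
/-- (C) number of clauses `Σ_i |H_i|`. -/
def sizeC (Φ : Finset (Finset V × V)) : ℕ := Φ.card
/-- (TA) total area `Σ_i (|B_i| + |H_i|)`. -/
def sizeTA (Φ : Finset (Finset V × V)) : ℕ := sizeBA Φ + sizeC Φ
/-- (BC) bodies plus clauses `Σ_i (|H_i| + 1)`. -/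
def sizeBC (Φ : Finset (Finset V × V)) : ℕ := sizeB Φ + sizeC Φ
/-- (L) number of literals `Σ_i (|B_i| + 1)·|H_i|`. -/
def sizeL (Φ : Finset (Finset V × V)) : ℕ := ∑ c ∈ Φ, (c.1.card + 1)

/-- `μ` is one of the six size measures. -/
def IsMeasure (μ : Finset (Finset V × V) → ℕ) : Prop :=
  μ = sizeB ∨ μ = sizeBA ∨ μ = sizeTA ∨ μ = sizeC ∨ μ = sizeBC ∨ μ = sizeL

/-- `OPT_μ(𝓑)`: minimum `μ`-size of a CNF representing `h_𝓑`. -/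
noncomputable def OPT (μ : Finset (Finset V × V) → ℕ) (𝓑 : Finset (Finset V)) : ℕ :=
  sInf {s : ℕ | ∃ Φ : Finset (Finset V × V), Represents 𝓑 Φ ∧ μ Φ = s}

/-- `price_μ(S,T)`: minimum `μ`-size of a pure Horn CNF with bodies in `𝓑`
whose forward chaining from `S` reaches all of `T`. -/
noncomputable def price (μ : Finset (Finset V × V) → ℕ) (𝓑 : Finset (Finset V))
    (S T : Finset V) : ℕ :=
  sInf {s : ℕ | ∃ Φ : Finset (Finset V × V),
    PureHorn Φ ∧ (∀ c ∈ Φ, c.1 ∈ 𝓑) ∧ ↑T ⊆ hornClosure Φ ↑S ∧ μ Φ = s}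

/-! A CNF `Φ` representing `h_𝓑` must reproduce the closures of `Ψ_𝓑`: every body of `Φ` contains
a member of `𝓑` (a set containing no member of `𝓑` is `Ψ_𝓑`-closed), and every `B ∈ 𝓑` contains a
body of `Φ` (otherwise `B ≠ V` would be `Φ`-closed). For a Sperner family, sending `B` to a body
inside it is injective, so `Φ` has at least `m` bodies. Every vertex lies outside some `B ∈ 𝓑`
yet is derived from `B`, so it is the head of a clause: `Φ` has at least `n` clauses. Each clause
carries at least `δ + 1`, and at least `2`, literals. -/

section HornClosure

variable {α : Type*} {Φ : Finset (Finset α × α)} {Z W : Set α}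

theorem subset_hornClosure (Φ : Finset (Finset α × α)) (Z : Set α) : Z ⊆ hornClosure Φ Z :=
  fun _ hv => Set.mem_sInter.2 fun _ hW => hW.1 hv

theorem hornClosed_hornClosure (Φ : Finset (Finset α × α)) (Z : Set α) :
    HornClosed Φ (hornClosure Φ Z) := fun c hc hsub =>
  Set.mem_sInter.2 fun _ hW => hW.2 c hc (hsub.trans (Set.sInter_subset_of_mem hW))

theorem hornClosure_subset (hZW : Z ⊆ W) (hW : HornClosed Φ W) : hornClosure Φ Z ⊆ W :=
  Set.sInter_subset_of_mem ⟨hZW, hW⟩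

end HornClosure

section KeyCNF

variable {𝓑 : Finset (Finset V)}

theorem mem_keyCNF {c : Finset V × V} : c ∈ keyCNF 𝓑 ↔ c.1 ∈ 𝓑 ∧ c.2 ∉ c.1 := by
  obtain ⟨B, v⟩ := c
  simp only [keyCNF, mem_biUnion, mem_image, mem_sdiff, mem_univ, true_and, Prod.mk.injEq]
  constructor
  · rintro ⟨B', hB', v', hv', rfl, rfl⟩
    exact ⟨hB', hv'⟩
  · rintro ⟨hB, hv⟩
    exact ⟨B, hB, v, hv, rfl, rfl⟩

theorem pureHorn_keyCNF (hne : ∀ B ∈ 𝓑, B.Nonempty) : PureHorn (keyCNF 𝓑) := fun _ hc =>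
  ⟨hne _ (mem_keyCNF.1 hc).1, (mem_keyCNF.1 hc).2⟩

theorem hornClosure_keyCNF_of_mem {B : Finset V} (hB : B ∈ 𝓑) :
    hornClosure (keyCNF 𝓑) ↑B = Set.univ := by
  refine Set.eq_univ_of_forall fun v => ?_
  by_cases hv : v ∈ B
  · exact subset_hornClosure _ _ hv
  · exact hornClosed_hornClosure _ _ (B, v) (mem_keyCNF.2 ⟨hB, hv⟩) (subset_hornClosure _ _)

theorem hornClosure_keyCNF_of_forall_not_subset {Z : Finset V} (h : ∀ B ∈ 𝓑, ¬B ⊆ Z) :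
    hornClosure (keyCNF 𝓑) ↑Z = ↑Z :=
  (hornClosure_subset subset_rfl fun c hc hsub =>
    absurd (coe_subset.1 hsub) (h c.1 (mem_keyCNF.1 hc).1)).antisymm (subset_hornClosure _ _)

end KeyCNF

namespace Represents

variable {𝓑 : Finset (Finset V)} {Φ : Finset (Finset V × V)}

theorem exists_subset_fst (hrep : Represents 𝓑 Φ) {c : Finset V × V} (hc : c ∈ Φ) :
    ∃ B ∈ 𝓑, B ⊆ c.1 := by
  by_contra! h
  have hhead : c.2 ∈ hornClosure Φ ↑c.1 :=
    hornClosed_hornClosure Φ _ c hc (subset_hornClosure _ _)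
  rw [hrep.2, hornClosure_keyCNF_of_forall_not_subset h] at hhead
  exact (hrep.1 c hc).2 hhead

theorem exists_fst_subset (hrep : Represents 𝓑 Φ) {B : Finset V} (hB : B ∈ 𝓑)
    (hBV : B ≠ univ) : ∃ c ∈ Φ, c.1 ⊆ B := by
  by_contra! h
  have hclosed : hornClosure Φ ↑B ⊆ ↑B :=
    hornClosure_subset subset_rfl fun c hc hsub => absurd (coe_subset.1 hsub) (h c hc)
  rw [hrep.2, hornClosure_keyCNF_of_mem hB, Set.univ_subset_iff] at hclosed
  exact hBV (coe_eq_univ.1 hclosed)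

theorem mem_image_snd (hrep : Represents 𝓑 Φ) {B : Finset V} (hB : B ∈ 𝓑) {v : V}
    (hv : v ∉ B) : v ∈ Φ.image Prod.snd := by
  have hclosed : hornClosure Φ ↑B ⊆ ↑B ∪ ↑(Φ.image Prod.snd) :=
    hornClosure_subset Set.subset_union_left fun c hc _ =>
      Or.inr (mem_coe.2 (mem_image_of_mem Prod.snd hc))
  rw [hrep.2, hornClosure_keyCNF_of_mem hB] at hclosed
  exact (hclosed (Set.mem_univ v)).resolve_left hv

theorem card_le_sizeB (hrep : Represents 𝓑 Φ) (hproper : ∀ B ∈ 𝓑, B ≠ univ)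
    (hsperner : ∀ B ∈ 𝓑, ∀ B' ∈ 𝓑, B ⊆ B' → B = B') : 𝓑.card ≤ sizeB Φ := by
  have hbodies : ∀ B ∈ 𝓑, ∃ C ∈ Φ.image Prod.fst, C ⊆ B := fun B hB => by
    obtain ⟨c, hc, hcB⟩ := hrep.exists_fst_subset hB (hproper B hB)
    exact ⟨c.1, mem_image_of_mem _ hc, hcB⟩
  choose! body hbody hbodyB using hbodies
  refine card_le_card_of_injOn body hbody fun B₁ h₁ B₂ h₂ heq => ?_
  -- the member of `𝓑` inside the common body lies in both `B₁` and `B₂`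
  obtain ⟨c, hc, hcB₁⟩ := mem_image.1 (hbody B₁ h₁)
  obtain ⟨B, hB, hBc⟩ := hrep.exists_subset_fst hc
  rw [hcB₁] at hBc
  exact (hsperner B hB B₁ h₁ (hBc.trans (hbodyB B₁ h₁))).symm.trans
    (hsperner B hB B₂ h₂ ((heq ▸ hBc).trans (hbodyB B₂ h₂)))

theorem card_le_sizeC (hrep : Represents 𝓑 Φ) (hinter : ∀ v : V, ∃ B ∈ 𝓑, v ∉ B) :
    Fintype.card V ≤ sizeC Φ := by
  have himage : Φ.image Prod.snd = univ := eq_univ_of_forall fun v => by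
    obtain ⟨B, hB, hv⟩ := hinter v
    exact hrep.mem_image_snd hB hv
  rw [← card_univ, ← himage]
  exact card_image_le

end Represents

section Sizes

variable {α : Type*} {Φ : Finset (Finset α × α)}

theorem sizeB_le_sizeC [DecidableEq α] (Φ : Finset (Finset α × α)) : sizeB Φ ≤ sizeC Φ :=
  card_image_le

theorem sizeB_le_sizeBA [DecidableEq α] (hΦ : PureHorn Φ) : sizeB Φ ≤ sizeBA Φ := by
  rw [sizeB, card_eq_sum_ones]
  exact sum_le_sum fun B hB => by
    obtain ⟨c, hc, rfl⟩ := mem_image.1 hB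
    exact card_pos.2 (hΦ c hc).1

theorem card_mul_le_sizeL {k : ℕ} (h : ∀ c ∈ Φ, k ≤ c.1.card) :
    Φ.card * (k + 1) ≤ sizeL Φ := by
  rw [← smul_eq_mul]
  exact card_nsmul_le_sum Φ _ _ fun c hc => Nat.succ_le_succ (h c hc)

theorem sizeC_le_sizeL (Φ : Finset (Finset α × α)) : sizeC Φ ≤ sizeL Φ := by
  simpa [sizeC] using card_mul_le_sizeL (Φ := Φ) (k := 0) fun _ _ => Nat.zero_le _

end Sizes

theorem le_OPT {𝓑 : Finset (Finset V)} {μ : Finset (Finset V × V) → ℕ} {k : ℕ}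
    (hne : ∀ B ∈ 𝓑, B.Nonempty) (h : ∀ Φ, Represents 𝓑 Φ → k ≤ μ Φ) : k ≤ OPT μ 𝓑 :=
  le_csInf ⟨_, keyCNF 𝓑, ⟨pureHorn_keyCNF hne, fun _ => rfl⟩, rfl⟩ fun _ ⟨Φ, hrep, hs⟩ =>
    hs ▸ h Φ hrep

theorem stmt2_general {V : Type*} [Fintype V] [DecidableEq V]
    (𝓑 : Finset (Finset V)) (m n δ : ℕ)
    (hm : 𝓑.card = m) (hn : Fintype.card V = n)
    (hne : ∀ B ∈ 𝓑, B.Nonempty) (hproper : ∀ B ∈ 𝓑, B ≠ Finset.univ)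
    (hsperner : ∀ B ∈ 𝓑, ∀ B' ∈ 𝓑, B ⊆ B' → B = B')
    (hinter : ∀ v : V, ∃ B ∈ 𝓑, v ∉ B)
    (hδ : ∃ B ∈ 𝓑, B.card = δ ∧ ∀ B' ∈ 𝓑, δ ≤ B'.card) :
    (∀ μ : Finset (Finset V × V) → ℕ, IsMeasure μ → m ≤ OPT μ 𝓑) ∧
    (∀ μ : Finset (Finset V × V) → ℕ,
      (μ = sizeTA ∨ μ = sizeC ∨ μ = sizeBC ∨ μ = sizeL) → n ≤ OPT μ 𝓑) ∧
    max (n * (δ + 1)) (2 * m) ≤ OPT sizeL 𝓑 := by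
  obtain ⟨-, -, -, hδmin⟩ := hδ
  have hmB {Φ} (hrep : Represents 𝓑 Φ) : m ≤ sizeB Φ :=
    hm ▸ hrep.card_le_sizeB hproper hsperner
  have hmBA {Φ} (hrep : Represents 𝓑 Φ) : m ≤ sizeBA Φ :=
    (hmB hrep).trans (sizeB_le_sizeBA hrep.1)
  have hmC {Φ} (hrep : Represents 𝓑 Φ) : m ≤ sizeC Φ := (hmB hrep).trans (sizeB_le_sizeC Φ)
  have hnC {Φ} (hrep : Represents 𝓑 Φ) : n ≤ sizeC Φ := hn ▸ hrep.card_le_sizeC hinter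
  refine ⟨?_, ?_, max_le (le_OPT hne fun Φ hrep => ?_) (le_OPT hne fun Φ hrep => ?_)⟩
  · rintro μ (rfl | rfl | rfl | rfl | rfl | rfl) <;> refine le_OPT hne fun Φ hrep => ?_
    exacts [hmB hrep, hmBA hrep, (hmBA hrep).trans (Nat.le_add_right _ _), hmC hrep,
      (hmB hrep).trans (Nat.le_add_right _ _), (hmC hrep).trans (sizeC_le_sizeL Φ)]
  · rintro μ (rfl | rfl | rfl | rfl) <;> refine le_OPT hne fun Φ hrep => ?_
    exacts [(hnC hrep).trans (Nat.le_add_left _ _), hnC hrep,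
      (hnC hrep).trans (Nat.le_add_left _ _), (hnC hrep).trans (sizeC_le_sizeL Φ)]
  · refine (Nat.mul_le_mul_right _ (hnC hrep)).trans (card_mul_le_sizeL fun c hc => ?_)
    obtain ⟨B, hBmem, hsub⟩ := hrep.exists_subset_fst hc
    exact (hδmin B hBmem).trans (card_le_card hsub)
  · rw [mul_comm]
    exact (Nat.mul_le_mul_right _ (hmC hrep)).trans
      (card_mul_le_sizeL fun c hc => card_pos.2 (hrep.1 c hc).1)

/-- Lower bounds: `OPT_*(𝓑) ≥ m` for all six measures, `OPT_*(𝓑) ≥ n` for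
`* ∈ {TA, C, BC, L}`, and `OPT_L(𝓑) ≥ max{n(δ+1), 2m}` where `δ` is the
size of a smallest body. -/
theorem stmt2 {V : Type*} [Fintype V] [DecidableEq V]
    (𝓑 : Finset (Finset V)) (m n δ : ℕ)
    (hm : 𝓑.card = m) (hn : Fintype.card V = n)
    (hne : ∀ B ∈ 𝓑, B.Nonempty) (hproper : ∀ B ∈ 𝓑, B ≠ Finset.univ)
    (hsperner : ∀ B ∈ 𝓑, ∀ B' ∈ 𝓑, B ⊆ B' → B = B')
    (hcover : ∀ v : V, ∃ B ∈ 𝓑, v ∈ B)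
    (hinter : ∀ v : V, ∃ B ∈ 𝓑, v ∉ B)
    (hδ : ∃ B ∈ 𝓑, B.card = δ ∧ ∀ B' ∈ 𝓑, δ ≤ B'.card) :
    (∀ μ : Finset (Finset V × V) → ℕ, IsMeasure μ → m ≤ OPT μ 𝓑) ∧
    (∀ μ : Finset (Finset V × V) → ℕ,
      (μ = sizeTA ∨ μ = sizeC ∨ μ = sizeBC ∨ μ = sizeL) → n ≤ OPT μ 𝓑) ∧
    max (n * (δ + 1)) (2 * m) ≤ OPT sizeL 𝓑 :=
  stmt2_general 𝓑 m n δ hm hn hne hproper hsperner hinter hδ
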